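/- arXiv:2303.17270 — 2 statements merged into one kernel-verified Lean document; each statement's English description precedes it below -/
import Mathlib

section
/- Let d ≥ 1, n ≥ 2, k ≥ 1. The image α(RTM(ℤ^d,n,k)) of the average movement map equals the subgroup of (ℚ^d, +) generated by the vectors e_i/(k·n^j) for j ∈ ℕ and 1 ≤ i ≤ d, where e_i denotes the i-th standard basis vector. -/
open MeasureTheory

/-- The shift action on configurations: `(shiftC v x) u = x (u - v)`. -/
def shiftC {d : ℕ} {A : Type*} (v : Fin d → ℤ) (x : (Fin d → ℤ) → A) : (Fin d → ℤ) → A :=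
  fun u => x (u - v)

/-- The moving-head space `Σ^{ℤ^d} × Q × ℤ^d`. -/
abbrev Head (d n k : ℕ) : Type :=
  ((Fin d → ℤ) → Fin n) × Fin k × (Fin d → ℤ)

/-- The moving-tape space `Σ^{ℤ^d} × Q`. -/
abbrev Tape (d n k : ℕ) : Type := ((Fin d → ℤ) → Fin n) × Fin k

/-- `T` is a moving-head `(ℤ^d,n,k)`-Turing machine. -/
def IsTM (d n k : ℕ) (T : Head d n k → Head d n k) : Prop :=
  ∃ (Fi Fo : Finset (Fin d → ℤ))
    (f : ((Fin d → ℤ) → Fin n) × Fin k → ((Fin d → ℤ) → Fin n) × Fin k × (Fin d → ℤ)),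
    (∀ (x y : (Fin d → ℤ) → Fin n) (q : Fin k),
        (∀ u ∈ Fi, x u = y u) → f (x, q) = f (y, q)) ∧
    ∀ (x : (Fin d → ℤ) → Fin n) (q : Fin k) (v : Fin d → ℤ),
      T (x, q, v) =
        ((fun u => if u - v ∈ Fo then (f (shiftC (-v) x, q)).1 (u - v) else x u),
         (f (shiftC (-v) x, q)).2.1,
         v + (f (shiftC (-v) x, q)).2.2)

/-- `T` is a reversible moving-head Turing machine. -/
def IsRTM (d n k : ℕ) (T : Head d n k → Head d n k) : Prop :=
  IsTM d n k T ∧ ∃ T' : Head d n k → Head d n k,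
    IsTM d n k T' ∧ T ∘ T' = id ∧ T' ∘ T = id

/-- The canonical epimorphism `Ψ` from moving-head machines to moving-tape machines:
`Ψ(T)(x,q) = (σ^{-v} y, r)` whenever `T (x,q,0) = (y,r,v)`. -/
def Psi (d n k : ℕ) (T : Head d n k → Head d n k) : Tape d n k → Tape d n k :=
  fun p =>
    (shiftC (-(T (p.1, p.2, 0)).2.2) (T (p.1, p.2, 0)).1, (T (p.1, p.2, 0)).2.1)

/-- `s` is a shift indicator of the moving-tape machine `T`. -/
def IsShiftIndicator (d n k : ℕ) (T : Tape d n k → Tape d n k)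
    (s : Tape d n k → (Fin d → ℤ)) : Prop :=
  Continuous s ∧
    ∃ F : Finset (Fin d → ℤ),
      ∀ (x : (Fin d → ℤ) → Fin n) (q : Fin k), ∀ u ∉ F,
        (T (x, q)).1 u = shiftC (s (x, q)) x u


/-!
A continuous shift indicator depends only on the state and on the cells of a finite window `F`,
and the image of `μ` under restriction to such a window is the uniform measure, so every average
movement has the form `z / (k n ^ #F)` with `z ∈ ℤ^d`.

Conversely, `z / (k n ^ c)` is the average movement of the machine which, in state `0`, moves its
head by `-z` when the cells `-z, -2z, …, -cz` ahead of it are all `0` (an event of measure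
`1 / (k n ^ c)`), and otherwise swaps the cells `0` and `-cz`. The swap turns a failure of this
test into a failure of the test on `0, -z, …, -(c-1)z` that the inverse machine performs, which
makes the machine reversible.
-/

section Shift

variable {d : ℕ} {A : Type*}

@[simp]
lemma shiftC_zero (x : (Fin d → ℤ) → A) : shiftC 0 x = x := by
  funext u
  simp [shiftC]

@[simp]
lemma shiftC_shiftC (v w : Fin d → ℤ) (x : (Fin d → ℤ) → A) :
    shiftC v (shiftC w x) = shiftC (v + w) x := by
  funext u
  simp [shiftC, sub_sub]

end Shift

theorem mem_closure_single_div_iff {ι K : Type*} [Fintype ι] [DecidableEq ι] [Field K]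
    {a : K} {b : ℕ} (hb : (b : K) ≠ 0) {w : ι → K} :
    w ∈ AddSubgroup.closure
        {w : ι → K | ∃ (i : ι) (j : ℕ), w = Pi.single i (1 / (a * b ^ j))} ↔
      ∃ (c : ℕ) (z : ι → ℤ), w = fun i => z i / (a * b ^ c) := by
  constructor
  · intro hw
    induction hw using AddSubgroup.closure_induction with
    | mem _ hx =>
      obtain ⟨i, j, rfl⟩ := hx
      refine ⟨j, Pi.single i 1, funext fun i' => ?_⟩
      rcases eq_or_ne i' i with rfl | h
      · simp
      · simp [Pi.single_eq_of_ne h]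
    | zero => exact ⟨0, 0, funext fun _ => by simp⟩
    | add _ _ _ _ hx hy =>
      obtain ⟨c₁, z₁, rfl⟩ := hx
      obtain ⟨c₂, z₂, rfl⟩ := hy
      refine ⟨c₁ + c₂, fun i => z₁ i * b ^ c₂ + z₂ i * b ^ c₁, funext fun i => ?_⟩
      have h₁ := mul_div_mul_right (z₁ i : K) (a * b ^ c₁) (pow_ne_zero c₂ hb)
      have h₂ := mul_div_mul_right (z₂ i : K) (a * b ^ c₂) (pow_ne_zero c₁ hb)
      simp only [Pi.add_apply, ← h₁, ← h₂]
      push_cast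
      ring
    | neg _ _ hx =>
      obtain ⟨c, z, rfl⟩ := hx
      exact ⟨c, -z, funext fun i => by simp [neg_div]⟩
  · rintro ⟨c, z, rfl⟩
    have hsum : (fun i => (z i : K) / (a * b ^ c)) =
        ∑ i, z i • Pi.single i (1 / (a * b ^ c)) := by
      funext i'
      simp [Finset.sum_apply, Pi.single_apply, div_eq_mul_inv]
    rw [hsum]
    refine AddSubgroup.sum_mem _ fun i _ =>
      AddSubgroup.zsmul_mem _ (AddSubgroup.subset_closure ?_) _
    exact ⟨i, c, rfl⟩

theorem Continuous.exists_finset_dependsOn {ι X β : Type*} [TopologicalSpace X]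
    [DiscreteTopology X] [Finite X] [TopologicalSpace β] [DiscreteTopology β]
    {f : (ι → X) → β} (hf : Continuous f) : ∃ F : Finset ι, DependsOn f F := by
  classical
  have hcyl : ∀ x, ∃ I : Finset ι, ∀ y ∈ (I : Set ι).pi fun i => {x i}, f y = f x := by
    intro x
    have hx : f ⁻¹' {f x} ∈ nhds x := hf.continuousAt.preimage_mem_nhds (by simp)
    rw [nhds_pi, Filter.mem_pi'] at hx
    obtain ⟨I, t, ht, hsub⟩ := hx
    exact ⟨I, fun y hy => hsub fun i hi => (hy i hi : y i = x i) ▸ mem_of_mem_nhds (ht i)⟩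
  choose I hI using hcyl
  obtain ⟨S, hS⟩ := isCompact_univ.elim_finite_subcover
    (fun x => (I x : Set ι).pi fun i => {x i})
    (fun x => isOpen_set_pi (I x).finite_toSet fun _ _ => isOpen_discrete _)
    (fun x _ => Set.mem_iUnion.2 ⟨x, fun _ _ => rfl⟩)
  refine ⟨S.sup I, fun x y hxy => ?_⟩
  obtain ⟨x₀, hx₀, hx⟩ := Set.mem_iUnion₂.1 (hS (Set.mem_univ x))
  have hy : y ∈ (I x₀ : Set ι).pi fun i => {x₀ i} := fun i hi =>
    (hxy i (Finset.le_sup (f := I) hx₀ hi)).symm.trans (hx i hi)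
  rw [hI x₀ x hx, hI x₀ y hy]

section Window

variable {d n k : ℕ}

def window (F : Finset (Fin d → ℤ)) (p : Tape d n k) : (F → Fin n) × Fin k :=
  (fun u => p.1 u, p.2)

lemma continuous_window (F : Finset (Fin d → ℤ)) : Continuous (window (n := n) (k := k) F) :=
  (continuous_pi fun u : F => (continuous_apply (u : Fin d → ℤ)).comp continuous_fst).prodMk
    continuous_snd

lemma window_eq_iff {F : Finset (Fin d → ℤ)} {p : Tape d n k} {a : (F → Fin n) × Fin k} :
    window F p = a ↔ (∀ u (hu : u ∈ F), p.1 u = a.1 ⟨u, hu⟩) ∧ p.2 = a.2 := by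
  simp [window, Prod.ext_iff, funext_iff]

lemma window_congr {F : Finset (Fin d → ℤ)} {x y : (Fin d → ℤ) → Fin n} (q : Fin k)
    (h : ∀ u ∈ F, x u = y u) : window F (x, q) = window F (y, q) :=
  Prod.ext (funext fun u => h u u.2) rfl

theorem Continuous.exists_eq_comp_window [NeZero n] {β : Type*} [TopologicalSpace β]
    [DiscreteTopology β] {s : Tape d n k → β} (hs : Continuous s) :
    ∃ (F : Finset (Fin d → ℤ)) (S : (F → Fin n) × Fin k → β), s = S ∘ window F := by
  choose F hF using fun q : Fin k => (hs.comp (Continuous.prodMk_left q)).exists_finset_dependsOn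
  refine ⟨Finset.univ.sup F, fun a => s (Subtype.val.extend a.1 0, a.2), funext fun p => ?_⟩
  refine (hF p.2).mono (Finset.coe_subset.2 (Finset.le_sup (Finset.mem_univ _))) fun u hu => ?_
  rw [Function.extend_val_apply (Finset.mem_coe.1 hu)]
  rfl

end Window

section Measure

variable {d n k : ℕ} [MeasurableSpace (Tape d n k)]

def IsUniformBernoulli (μ : Measure (Tape d n k)) : Prop :=
  ∀ (F : Finset (Fin d → ℤ)) (p : (Fin d → ℤ) → Fin n) (q : Fin k),
    μ {y : Tape d n k | (∀ u ∈ F, y.1 u = p u) ∧ y.2 = q} =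
      1 / ((n : ENNReal) ^ F.card * (k : ENNReal))

variable [OpensMeasurableSpace (Tape d n k)] {μ : Measure (Tape d n k)}

lemma measurable_window (F : Finset (Fin d → ℤ)) : Measurable (window (n := n) (k := k) F) :=
  measurable_to_countable' fun a =>
    ((isOpen_discrete {a}).preimage (continuous_window F)).measurableSet

theorem IsUniformBernoulli.map_window [NeZero n] (hμ : IsUniformBernoulli μ)
    (F : Finset (Fin d → ℤ)) :
    μ.map (window F) = ((n : ENNReal) ^ F.card * k)⁻¹ • Measure.count := by
  refine Measure.ext_iff_singleton.2 fun a => ?_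
  have hcyl : window F ⁻¹' {a} =
      {y : Tape d n k | (∀ u ∈ F, y.1 u = Subtype.val.extend a.1 0 u) ∧ y.2 = a.2} := by
    ext y
    simp +contextual [window_eq_iff, Function.extend_val_apply]
  rw [Measure.map_apply (measurable_window F) (measurableSet_singleton a), hcyl, hμ,
    Measure.smul_apply, Measure.count_singleton, smul_eq_mul, mul_one, one_div]

theorem IsUniformBernoulli.integral_comp_window [NeZero n] (hμ : IsUniformBernoulli μ)
    (F : Finset (Fin d → ℤ)) (f : (F → Fin n) × Fin k → ℝ) :
    ∫ p, f (window F p) ∂μ = ((n : ℝ) ^ F.card * k)⁻¹ * ∑ a, f a := by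
  rw [← integral_map (measurable_window F).aemeasurable
    AEStronglyMeasurable.of_discrete, hμ.map_window, integral_smul_measure,
    integral_count]
  simp

theorem IsUniformBernoulli.exists_integral_eq_div [NeZero n] (hμ : IsUniformBernoulli μ)
    {s : Tape d n k → (Fin d → ℤ)} (hs : Continuous s) :
    ∃ (c : ℕ) (z : Fin d → ℤ),
      (fun i => ∫ p, (s p i : ℝ) ∂μ) = fun i => (z i : ℝ) / (k * n ^ c) := by
  obtain ⟨F, S, rfl⟩ := hs.exists_eq_comp_window
  refine ⟨F.card, fun i => ∑ a, S a i, funext fun i => ?_⟩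
  rw [Function.comp_def, hμ.integral_comp_window F fun a => (S a i : ℝ)]
  push_cast
  ring

end Measure

section Machine

variable {d n k : ℕ}

def ofOrigin (T₀ : Tape d n k → Head d n k) (p : Head d n k) : Head d n k :=
  let r := T₀ (shiftC (-p.2.2) p.1, p.2.1)
  (shiftC p.2.2 r.1, r.2.1, p.2.2 + r.2.2)

theorem isTM_ofOrigin [NeZero n] {T₀ : Tape d n k → Head d n k} (F : Finset (Fin d → ℤ))
    (hout : ∀ p, ∀ u ∉ F, (T₀ p).1 u = p.1 u)
    (hloc : ∀ x y q, (∀ u ∈ F, x u = y u) →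
      (T₀ (x, q)).2 = (T₀ (y, q)).2 ∧ ∀ u ∈ F, (T₀ (x, q)).1 u = (T₀ (y, q)).1 u) :
    IsTM d n k (ofOrigin T₀) := by
  refine ⟨F, F, fun p => (F.piecewise (T₀ p).1 0, (T₀ p).2), fun x y q hxy => ?_,
    fun x q v => ?_⟩
  · obtain ⟨h₂, h₁⟩ := hloc x y q hxy
    dsimp only
    rw [h₂, F.piecewise_congr h₁ fun _ _ => rfl]
  · refine Prod.ext (funext fun u => ?_) rfl
    by_cases hu : u - v ∈ F
    · simp [ofOrigin, shiftC, hu]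
    · simp [ofOrigin, shiftC, hu, hout _ _ hu]

theorem ofOrigin_comp_eq_id {T₀ T₀' : Tape d n k → Head d n k}
    (h : ∀ p, T₀' (shiftC (-(T₀ p).2.2) (T₀ p).1, (T₀ p).2.1) =
      (shiftC (-(T₀ p).2.2) p.1, p.2, -(T₀ p).2.2)) :
    ofOrigin T₀' ∘ ofOrigin T₀ = id := by
  funext ⟨x, q, v⟩
  have hw := h (shiftC (-v) x, q)
  set w := (T₀ (shiftC (-v) x, q)).2.2
  simp only [ofOrigin, Function.comp_apply, id, shiftC_shiftC] at hw ⊢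
  rw [show -(v + w) + v = -w by abel, hw, shiftC_shiftC, show v + w + (-w + -v) = 0 by abel,
    add_neg_cancel_right, shiftC_zero]

theorem psi_ofOrigin (T₀ : Tape d n k → Head d n k) (p : Tape d n k) :
    Psi d n k (ofOrigin T₀) p = (shiftC (-(T₀ p).2.2) (T₀ p).1, (T₀ p).2.1) := by
  simp [Psi, ofOrigin]

end Machine

section Gate

variable {d n k : ℕ}

open Classical in
noncomputable def gateRule (E : Set (Tape d n k)) (m : Fin d → ℤ)
    (ρ : Equiv.Perm (Fin d → ℤ)) (p : Tape d n k) : Head d n k :=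
  if p ∈ E then (p.1, p.2, m) else (p.1 ∘ ρ, p.2, 0)

variable {E : Set (Tape d n k)} {m : Fin d → ℤ} {ρ : Equiv.Perm (Fin d → ℤ)}

theorem isTM_ofOrigin_gateRule [NeZero n] (F : Finset (Fin d → ℤ))
    (hE : ∀ x y q, (∀ u ∈ F, x u = y u) → ((x, q) ∈ E ↔ (y, q) ∈ E))
    (hρ : ∀ u ∉ F, ρ u = u) :
    IsTM d n k (ofOrigin (gateRule E m ρ)) := by
  have hρF : ∀ u ∈ F, ρ u ∈ F := fun u hu => by
    by_contra h
    exact h (by rwa [ρ.injective (hρ _ h)])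
  refine isTM_ofOrigin F (fun p u hu => ?_) (fun x y q hxy => ?_)
  · unfold gateRule
    split_ifs <;> simp [hρ u hu]
  · unfold gateRule
    by_cases hx : (x, q) ∈ E
    · simpa [hx, (hE x y q hxy).1 hx] using hxy
    · simpa [hx, mt (hE x y q hxy).2 hx] using fun u hu => hxy _ (hρF u hu)

theorem isRTM_ofOrigin_gateRule [NeZero n] (F : Finset (Fin d → ℤ))
    (hE : ∀ x y q, (∀ u ∈ F, x u = y u) → ((x, q) ∈ E ↔ (y, q) ∈ E))
    (hE' : ∀ x y q, (∀ u ∈ F, x u = y u) →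
      ((shiftC m x, q) ∈ E ↔ (shiftC m y, q) ∈ E))
    (hρ : ∀ u ∉ F, ρ u = u)
    (hEρ : ∀ x q, (shiftC m (x ∘ ρ), q) ∈ E ↔ (x, q) ∈ E) :
    IsRTM d n k (ofOrigin (gateRule E m ρ)) := by
  set E' : Set (Tape d n k) := {p | (shiftC m p.1, p.2) ∈ E}
  have hρ' : ∀ u ∉ F, ρ.symm u = u := fun u hu => ρ.symm_apply_eq.2 (hρ u hu).symm
  refine ⟨isTM_ofOrigin_gateRule F hE hρ, ofOrigin (gateRule E' (-m) ρ.symm),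
    isTM_ofOrigin_gateRule F hE' hρ', ofOrigin_comp_eq_id fun ⟨x, q⟩ => ?_,
    ofOrigin_comp_eq_id fun ⟨x, q⟩ => ?_⟩
  · by_cases hx : (x, q) ∈ E'
    · simp_all [gateRule, E']
    · have : (x ∘ ρ.symm, q) ∉ E := by
        rwa [← hEρ, Function.comp_assoc, ρ.symm_comp_self, Function.comp_id]
      simp_all [gateRule, E', Function.comp_assoc]
  · by_cases hx : (x, q) ∈ E
    · simp_all [gateRule, E']
    · simp_all [gateRule, E', Function.comp_assoc]

theorem isShiftIndicator_psi_ofOrigin_gateRule (F : Finset (Fin d → ℤ))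
    (hρ : ∀ u ∉ F, ρ u = u) (hE : IsClopen E) :
    IsShiftIndicator d n k (Psi d n k (ofOrigin (gateRule E m ρ))) (E.indicator fun _ => -m) := by
  refine ⟨hE.continuous_indicator continuous_const, F, fun x q u hu => ?_⟩
  rw [psi_ofOrigin]
  by_cases hx : (x, q) ∈ E
  · simp [gateRule, hx]
  · simp [gateRule, hx, shiftC, hρ u hu]

end Gate

section Progression

variable {d : ℕ}

noncomputable def progression (m : Fin d → ℤ) (a b : ℤ) : Finset (Fin d → ℤ) :=
  (Finset.Icc a b).image (· • m)

lemma mem_progression {m u : Fin d → ℤ} {a b : ℤ} :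
    u ∈ progression m a b ↔ ∃ l, (a ≤ l ∧ l ≤ b) ∧ l • m = u := by
  simp [progression]

lemma card_progression {m : Fin d → ℤ} (hm : m ≠ 0) (c : ℕ) :
    (progression m 1 c).card = c := by
  rw [progression, Finset.card_image_of_injective _ (smul_left_injective ℤ hm), Int.card_Icc]
  simp

lemma sub_mem_progression {m u : Fin d → ℤ} {c : ℤ} (hu : u ∈ progression m 1 c) :
    u - m ∈ progression m 0 c := by
  obtain ⟨l, hl, rfl⟩ := mem_progression.1 hu
  exact mem_progression.2 ⟨l - 1, by omega, by rw [sub_smul, one_smul]⟩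

theorem image_swap_sub_progression (m : Fin d → ℤ) (c : ℤ) :
    (progression m 1 c).image (fun u => Equiv.swap 0 (c • m) (u - m)) = progression m 1 c := by
  refine Finset.eq_of_subset_of_card_le (fun v hv => ?_)
    (Finset.card_image_of_injective _ ((Equiv.injective _).comp sub_left_injective)).ge
  obtain ⟨_, hu, rfl⟩ := Finset.mem_image.1 hv
  obtain ⟨l, hl, rfl⟩ := mem_progression.1 hu
  rw [show l • m - m = (l - 1) • m by rw [sub_smul, one_smul], Equiv.swap_apply_def]
  split_ifs with h0 hc
  · exact mem_progression.2 ⟨c, by omega, rfl⟩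
  · -- `(l - 1) • m = c • m` with `l - 1 ≠ c` forces `m = 0`, contradicting `h0`
    have : (l - 1 - c) • m = 0 := by rw [sub_smul, hc, sub_self]
    rcases smul_eq_zero.1 this with h | rfl
    · omega
    · simp at h0
  · have hl1 : l ≠ 1 := by rintro rfl; simp at h0
    exact mem_progression.2 ⟨l - 1, by omega, rfl⟩

end Progression

section Shuttle

variable {d n k : ℕ} [NeZero n] [NeZero k]

lemma swap_apply_eq_self_of_notMem_progression {m u : Fin d → ℤ} {c : ℕ}
    (hu : u ∉ progression m 0 c) : Equiv.swap 0 ((c : ℤ) • m) u = u :=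
  Equiv.swap_apply_of_ne_of_ne
    (by rintro rfl; exact hu (mem_progression.2 ⟨0, by omega, zero_smul _ _⟩))
    (by rintro rfl; exact hu (mem_progression.2 ⟨c, by omega, rfl⟩))

def shuttleEvent (m : Fin d → ℤ) (c : ℕ) : Set (Tape d n k) :=
  window (progression m 1 c) ⁻¹' {(0, 0)}

noncomputable def shuttle (m : Fin d → ℤ) (c : ℕ) : Head d n k → Head d n k :=
  ofOrigin (gateRule (shuttleEvent m c) m (Equiv.swap 0 ((c : ℤ) • m)))

lemma shuttleEvent_congr {m : Fin d → ℤ} {c : ℕ} {x y : (Fin d → ℤ) → Fin n} (q : Fin k)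
    (h : ∀ u ∈ progression m 1 c, x u = y u) :
    (x, q) ∈ shuttleEvent m c ↔ (y, q) ∈ shuttleEvent m c := by
  rw [shuttleEvent, Set.mem_preimage, Set.mem_preimage, window_congr q h]

theorem isRTM_shuttle (m : Fin d → ℤ) (c : ℕ) : IsRTM d n k (shuttle m c) := by
  refine isRTM_ofOrigin_gateRule (progression m 0 c)
    (fun x y q hxy => shuttleEvent_congr q fun u hu => hxy u ?_)
    (fun x y q hxy => shuttleEvent_congr q fun u hu => hxy _ (sub_mem_progression hu))
    (fun _ => swap_apply_eq_self_of_notMem_progression) fun x q => ?_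
  · exact Finset.image_subset_image (Finset.Icc_subset_Icc zero_le_one le_rfl) hu
  · simp only [shuttleEvent, Set.mem_preimage, Set.mem_singleton_iff, window_eq_iff]
    conv_rhs => rw [← image_swap_sub_progression m c]
    simp [shiftC]

theorem isShiftIndicator_shuttle (m : Fin d → ℤ) (c : ℕ) :
    IsShiftIndicator d n k (Psi d n k (shuttle m c))
      ((shuttleEvent m c).indicator fun _ => -m) :=
  isShiftIndicator_psi_ofOrigin_gateRule (progression m 0 c)
    (fun _ => swap_apply_eq_self_of_notMem_progression)
    ((isClopen_discrete _).preimage (continuous_window _))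

theorem IsUniformBernoulli.integral_shuttle [MeasurableSpace (Tape d n k)]
    [OpensMeasurableSpace (Tape d n k)] {μ : Measure (Tape d n k)} (hμ : IsUniformBernoulli μ)
    (m : Fin d → ℤ) (c : ℕ) :
    (fun i => ∫ p, ((shuttleEvent m c).indicator (fun _ => -m) p i : ℝ) ∂μ) =
      fun i => -(m i : ℝ) / (k * n ^ c) := by
  funext i
  refine (hμ.integral_comp_window (progression m 1 c)
    fun a => ((({(0, 0)} : Set _).indicator (fun _ => -m) a i : ℤ) : ℝ)).trans ?_
  rcases eq_or_ne m 0 with rfl | hm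
  · simp
  · simp [Set.indicator_apply, ite_apply, apply_ite, card_progression hm, div_eq_inv_mul,
      mul_comm]

end Shuttle

theorem averageMovement_image_RTM_general
    (d n k : ℕ) (hn : 2 ≤ n) (hk : 1 ≤ k)
    (μ : @Measure (Tape d n k) (borel (Tape d n k)))
    (hμ : ∀ (F : Finset (Fin d → ℤ)) (p : (Fin d → ℤ) → Fin n) (q : Fin k),
        μ {y : Tape d n k | (∀ u ∈ F, y.1 u = p u) ∧ y.2 = q} =
          1 / ((n : ENNReal) ^ F.card * (k : ENNReal))) :
    {w : Fin d → ℝ | ∃ T : Head d n k → Head d n k, IsRTM d n k T ∧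
        ∃ s : Tape d n k → (Fin d → ℤ),
          IsShiftIndicator d n k (Psi d n k T) s ∧
          w = fun i => ∫ p, ((s p i : ℤ) : ℝ) ∂μ} =
      (AddSubgroup.closure
        {w : Fin d → ℝ | ∃ (i : Fin d) (j : ℕ),
          w = Pi.single i (1 / ((k : ℝ) * (n : ℝ) ^ j))} : Set (Fin d → ℝ)) := by
  let : MeasurableSpace (Tape d n k) := borel _
  have : BorelSpace (Tape d n k) := ⟨rfl⟩
  have : NeZero n := ⟨by omega⟩
  have : NeZero k := ⟨by omega⟩
  ext w
  rw [SetLike.mem_coe, mem_closure_single_div_iff (Nat.cast_ne_zero.2 (by omega))]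
  constructor
  · rintro ⟨T, -, s, ⟨hs, -⟩, rfl⟩
    exact IsUniformBernoulli.exists_integral_eq_div hμ hs
  · rintro ⟨c, z, rfl⟩
    refine ⟨shuttle (-z) c, isRTM_shuttle _ _, _, isShiftIndicator_shuttle _ _, ?_⟩
    rw [IsUniformBernoulli.integral_shuttle hμ]
    simp

/-- The image of `RTM(ℤ^d,n,k)` under the average movement
homomorphism `α` (computed via `Ψ` and the uniform measure `μ`, values read in
`ℝ^d ⊇ ℚ^d`) is exactly the additive subgroup generated by the vectors
`e_i / (k n^j)`, `j ∈ ℕ`, `1 ≤ i ≤ d`. -/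
theorem averageMovement_image_RTM
    (d n k : ℕ) (hd : 1 ≤ d) (hn : 2 ≤ n) (hk : 1 ≤ k)
    (μ : @Measure (Tape d n k) (borel (Tape d n k)))
    (hμ : ∀ (F : Finset (Fin d → ℤ)) (p : (Fin d → ℤ) → Fin n) (q : Fin k),
        μ {y : Tape d n k | (∀ u ∈ F, y.1 u = p u) ∧ y.2 = q} =
          1 / ((n : ENNReal) ^ F.card * (k : ENNReal))) :
    {w : Fin d → ℝ | ∃ T : Head d n k → Head d n k, IsRTM d n k T ∧
        ∃ s : Tape d n k → (Fin d → ℤ),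
          IsShiftIndicator d n k (Psi d n k T) s ∧
          w = fun i => ∫ p, ((s p i : ℤ) : ℝ) ∂μ} =
      (AddSubgroup.closure
        {w : Fin d → ℝ | ∃ (i : Fin d) (j : ℕ),
          w = Pi.single i (1 / ((k : ℝ) * (n : ℝ) ^ j))} : Set (Fin d → ℝ)) :=
  averageMovement_image_RTM_general d n k hn hk μ hμ
end

section
/- Let n, k ≥ 1. A classical (ℤ,n,k)-Turing machine T is reversible (i.e. has a moving-head Turing machine inverse) if and only if T = T_1 ∘ T_0 for some state-symbol permutation T_0 and some state-dependent shift T_1. In particular, every reversible classical Turing machine lies in EL(ℤ,n,k), the subgroup of RTM(ℤ,n,k) generated by the machines that never change the tape together with the machines that never move the head. -/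
/-- The shift action on one-dimensional configurations: `(shiftZ m x) i = x (i - m)`. -/
def shiftZ {A : Type*} (m : ℤ) (x : ℤ → A) : ℤ → A := fun i => x (i - m)

/-- The moving-head space `Σ^ℤ × Q × ℤ`. -/
abbrev HeadZ (n k : ℕ) : Type := (ℤ → Fin n) × Fin k × ℤ

/-- `T` is a moving-head `(ℤ,n,k)`-Turing machine. -/
def IsTMZ (n k : ℕ) (T : HeadZ n k → HeadZ n k) : Prop :=
  ∃ (Fi Fo : Finset ℤ) (f : (ℤ → Fin n) × Fin k → (ℤ → Fin n) × Fin k × ℤ),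
    (∀ (x y : ℤ → Fin n) (q : Fin k), (∀ u ∈ Fi, x u = y u) → f (x, q) = f (y, q)) ∧
    ∀ (x : ℤ → Fin n) (q : Fin k) (v : ℤ),
      T (x, q, v) =
        ((fun u => if u - v ∈ Fo then (f (shiftZ (-v) x, q)).1 (u - v) else x u),
         (f (shiftZ (-v) x, q)).2.1,
         v + (f (shiftZ (-v) x, q)).2.2)

/-- The group `RTM(ℤ,n,k)` realized as the set of permutations of the moving-head
space such that both the permutation and its inverse are Turing machines. -/
def RTMsetZ (n k : ℕ) : Set (Equiv.Perm (HeadZ n k)) :=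
  {e | IsTMZ n k ⇑e ∧ IsTMZ n k ⇑e.symm}

/-- `RFA(ℤ,n,k)`: reversible machines that never change the tape. -/
def RFAsetZ (n k : ℕ) : Set (Equiv.Perm (HeadZ n k)) :=
  {e | e ∈ RTMsetZ n k ∧ ∀ (x : ℤ → Fin n) (q : Fin k) (v : ℤ), (e (x, q, v)).1 = x}

/-- `LP(ℤ,n,k)`: reversible machines that never move the head. -/
def LPsetZ (n k : ℕ) : Set (Equiv.Perm (HeadZ n k)) :=
  {e | e ∈ RTMsetZ n k ∧ ∀ (x : ℤ → Fin n) (q : Fin k) (v : ℤ), (e (x, q, v)).2.2 = v}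

/-- `T` is a classical `(ℤ,n,k)`-Turing machine: it is given by a rule
`f : Σ × Q → Σ × Q × {-1,0,1}` acting only on the currently scanned cell. -/
def IsClassical (n k : ℕ) (T : HeadZ n k → HeadZ n k) : Prop :=
  ∃ f : Fin n × Fin k → Fin n × Fin k × ℤ,
    (∀ a q, (f (a, q)).2.2 ∈ ({-1, 0, 1} : Set ℤ)) ∧
    ∀ (x : ℤ → Fin n) (q : Fin k) (v : ℤ),
      T (x, q, v) =
        (Function.update x v (f (x v, q)).1, (f (x v, q)).2.1, v + (f (x v, q)).2.2)

/-- A state-symbol permutation: a classical machine performing a permutation of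
`Σ × Q` at the position of the head, with no movement. -/
def IsStateSymbolPerm (n k : ℕ) (T : HeadZ n k → HeadZ n k) : Prop :=
  ∃ π : Equiv.Perm (Fin n × Fin k),
    ∀ (x : ℤ → Fin n) (q : Fin k) (v : ℤ),
      T (x, q, v) = (Function.update x v (π (x v, q)).1, (π (x v, q)).2, v)

/-- A state-dependent shift: a classical machine that changes neither tape nor
state and moves by `δ q ∈ {-1,0,1}` depending only on the current state. -/
def IsStateDependentShift (n k : ℕ) (T : HeadZ n k → HeadZ n k) : Prop :=
  ∃ δ : Fin k → ℤ, (∀ q, δ q ∈ ({-1, 0, 1} : Set ℤ)) ∧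
    ∀ (x : ℤ → Fin n) (q : Fin k) (v : ℤ), T (x, q, v) = (x, q, v + δ q)

/-!
Injectivity of a classical machine forces its move to depend only on the state it enters:
if two rules enter the same state with moves `d ≠ d'`, heads started `d - d'` apart on
suitable tapes reach the same configuration. Given that, injectivity also forces
`(a, q) ↦ (b, q')` to be injective, hence a permutation `π` of the finite set `Σ × Q`, and
the machine is `π` followed by the shift by `δ(q')`. Conversely, such a machine is undone by
moving back by `δ(q)` and then applying `π⁻¹`; both machines read and write a single cell at a
bounded, state-dependent offset from the head, so both are moving-head machines.
-/

section

variable {n k : ℕ}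

open Function

/-- Classical machines are the case `r = 0`; their inverses, which first move back, need
`r ≠ 0`. -/
def offsetMachine (r : Fin k → ℤ) (g : Fin n × Fin k → Fin n × Fin k)
    (m : Fin n × Fin k → ℤ) : HeadZ n k → HeadZ n k :=
  fun p =>
    let w := p.2.2 + r p.2.1
    let c := (p.1 w, p.2.1)
    (update p.1 w (g c).1, (g c).2, w + m c)

@[simp]
lemma offsetMachine_apply (r : Fin k → ℤ) (g : Fin n × Fin k → Fin n × Fin k)
    (m : Fin n × Fin k → ℤ) (x : ℤ → Fin n) (q : Fin k) (v : ℤ) :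
    offsetMachine r g m (x, q, v) =
      (update x (v + r q) (g (x (v + r q), q)).1, (g (x (v + r q), q)).2,
        v + r q + m (x (v + r q), q)) :=
  rfl

lemma isTMZ_offsetMachine (r : Fin k → ℤ) (g : Fin n × Fin k → Fin n × Fin k)
    (m : Fin n × Fin k → ℤ) : IsTMZ n k (offsetMachine r g m) := by
  set R := Finset.univ.image r
  have hr : ∀ q, r q ∈ R := fun q => Finset.mem_image_of_mem r (Finset.mem_univ q)
  -- Off the window `R` the written tape is a constant, so the rule only reads `R`.
  refine ⟨R, R, fun p =>
    ((fun u => if u ∈ R then update p.1 (r p.2) (g (p.1 (r p.2), p.2)).1 u else p.1 (r p.2)),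
      (g (p.1 (r p.2), p.2)).2, r p.2 + m (p.1 (r p.2), p.2)), ?_, ?_⟩
  · intro x y q hxy
    simp only [hxy _ (hr q), Prod.mk.injEq, and_true]
    funext u
    split_ifs with hu
    · simp only [update_apply, hxy u hu]
    · rfl
  · intro x q v
    have hread : shiftZ (-v) x (r q) = x (v + r q) := by simp [shiftZ, add_comm]
    simp only [offsetMachine_apply, hread, Prod.mk.injEq, add_assoc, and_true]
    funext u
    by_cases hu : u - v ∈ R
    · simp only [if_pos hu, update_apply, shiftZ, sub_neg_eq_add, sub_add_cancel,
        sub_eq_iff_eq_add']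
    · have hne : u ≠ v + r q := fun h => hu (by simpa [h] using hr q)
      simp [hu, hne]

lemma offsetMachine_left_inverse (π : Equiv.Perm (Fin n × Fin k)) (δ : Fin k → ℤ) :
    LeftInverse (offsetMachine (-δ) π.symm 0) (offsetMachine 0 π (δ ∘ Prod.snd ∘ π)) := by
  rintro ⟨x, q, v⟩
  simp

lemma offsetMachine_right_inverse (π : Equiv.Perm (Fin n × Fin k)) (δ : Fin k → ℤ) :
    RightInverse (offsetMachine (-δ) π.symm 0) (offsetMachine 0 π (δ ∘ Prod.snd ∘ π)) := by
  rintro ⟨x, q, v⟩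
  simp

/-- The machine `T₁ ∘ T₀` of a state-symbol permutation `T₀` by `π` and a state-dependent
shift `T₁` by `δ`. -/
def permShift (π : Equiv.Perm (Fin n × Fin k)) (δ : Fin k → ℤ) : Equiv.Perm (HeadZ n k) where
  toFun := offsetMachine 0 π (δ ∘ Prod.snd ∘ π)
  invFun := offsetMachine (-δ) π.symm 0
  left_inv := offsetMachine_left_inverse π δ
  right_inv := offsetMachine_right_inverse π δ

lemma permShift_mem_RTMsetZ (π : Equiv.Perm (Fin n × Fin k)) (δ : Fin k → ℤ) :
    permShift π δ ∈ RTMsetZ n k :=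
  ⟨isTMZ_offsetMachine _ _ _, isTMZ_offsetMachine _ _ _⟩

lemma permShift_eq_mul (π : Equiv.Perm (Fin n × Fin k)) (δ : Fin k → ℤ) :
    permShift π δ = permShift 1 δ * permShift π 0 := by
  ext ⟨x, q, v⟩ <;> simp [permShift]

lemma permShift_zero_mem_LPsetZ (π : Equiv.Perm (Fin n × Fin k)) :
    permShift π 0 ∈ LPsetZ n k :=
  ⟨permShift_mem_RTMsetZ π 0, fun x q v => by simp [permShift]⟩

lemma permShift_one_mem_RFAsetZ (δ : Fin k → ℤ) : permShift 1 δ ∈ RFAsetZ n k :=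
  ⟨permShift_mem_RTMsetZ 1 δ, fun x q v => by simp [permShift]⟩

lemma permShift_mem_closure (π : Equiv.Perm (Fin n × Fin k)) (δ : Fin k → ℤ) :
    permShift π δ ∈ Subgroup.closure (RFAsetZ n k ∪ LPsetZ n k) := by
  rw [permShift_eq_mul]
  exact Subgroup.mul_mem _ (Subgroup.subset_closure (Or.inl (permShift_one_mem_RFAsetZ δ)))
    (Subgroup.subset_closure (Or.inr (permShift_zero_mem_LPsetZ π)))

lemma isStateSymbolPerm_iff {T : HeadZ n k → HeadZ n k} :
    IsStateSymbolPerm n k T ↔ ∃ π, T = permShift π 0 := by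
  constructor
  · rintro ⟨π, hπ⟩
    exact ⟨π, funext fun ⟨x, q, v⟩ => by simp [hπ, permShift]⟩
  · rintro ⟨π, rfl⟩
    exact ⟨π, fun x q v => by simp [permShift]⟩

lemma isStateDependentShift_iff {T : HeadZ n k → HeadZ n k} :
    IsStateDependentShift n k T ↔
      ∃ δ : Fin k → ℤ, (∀ q, δ q ∈ ({-1, 0, 1} : Set ℤ)) ∧ T = permShift 1 δ := by
  constructor
  · rintro ⟨δ, hδ, hT⟩
    exact ⟨δ, hδ, funext fun ⟨x, q, v⟩ => by simp [hT, permShift]⟩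
  · rintro ⟨δ, hδ, rfl⟩
    exact ⟨δ, hδ, fun x q v => by simp [permShift]⟩

lemma IsClassical.exists_eq_offsetMachine {T : HeadZ n k → HeadZ n k} (h : IsClassical n k T) :
    ∃ (g : Fin n × Fin k → Fin n × Fin k) (m : Fin n × Fin k → ℤ),
      (∀ c, m c ∈ ({-1, 0, 1} : Set ℤ)) ∧ T = offsetMachine 0 g m := by
  obtain ⟨f, hf, hT⟩ := h
  exact ⟨fun c => ((f c).1, (f c).2.1), fun c => (f c).2.2, fun c => hf c.1 c.2,
    funext fun ⟨x, q, v⟩ => by simp [hT]⟩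

lemma factorsThrough_of_injective_offsetMachine {g : Fin n × Fin k → Fin n × Fin k}
    {m : Fin n × Fin k → ℤ} (h : Injective (offsetMachine 0 g m)) :
    m.FactorsThrough (Prod.snd ∘ g) := by
  intro c c' hq
  by_contra hne
  set d := m c - m c'
  have hd : d ≠ 0 := sub_ne_zero.mpr hne
  set y : ℤ → Fin n := update (fun _ => (g c).1) d (g c').1
  have key : offsetMachine 0 g m (update y 0 c.1, c.2, 0) =
      offsetMachine 0 g m (update y d c'.1, c'.2, d) := by
    have hq' : (g c).2 = (g c').2 := hq
    simp [y, hd.symm, hq', d]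
  exact hd (congrArg (fun p => p.2.2) (h key)).symm

lemma injective_of_injective_offsetMachine {g : Fin n × Fin k → Fin n × Fin k}
    {m : Fin n × Fin k → ℤ} (h : Injective (offsetMachine 0 g m)) : Injective g := by
  intro c c' hg
  have hm : m c = m c' := factorsThrough_of_injective_offsetMachine h (congrArg Prod.snd hg)
  have key : offsetMachine 0 g m (update (fun _ => (g c).1) 0 c.1, c.2, 0) =
      offsetMachine 0 g m (update (fun _ => (g c).1) 0 c'.1, c'.2, 0) := by
    simp [hg, hm]
  have := h key
  simp only [Prod.mk.injEq] at this
  exact Prod.ext (by simpa using congrFun this.1 0) this.2.1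

lemma IsClassical.exists_eq_permShift {T : HeadZ n k → HeadZ n k} (h : IsClassical n k T)
    (hinj : Injective T) :
    ∃ (π : Equiv.Perm (Fin n × Fin k)) (δ : Fin k → ℤ),
      (∀ q, δ q ∈ ({-1, 0, 1} : Set ℤ)) ∧ T = permShift π δ := by
  obtain ⟨g, m, hm, rfl⟩ := h.exists_eq_offsetMachine
  have hfac := factorsThrough_of_injective_offsetMachine hinj
  have hg := injective_of_injective_offsetMachine hinj
  refine ⟨Equiv.ofBijective g (Finite.injective_iff_bijective.mp hg),
    extend (Prod.snd ∘ g) m 0, fun q => ?_, ?_⟩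
  · by_cases hq : ∃ c, (Prod.snd ∘ g) c = q
    · obtain ⟨c, rfl⟩ := hq
      rw [hfac.extend_apply]
      exact hm c
    · simp [extend_apply' _ _ _ hq]
  · exact congrArg (offsetMachine 0 g) (funext fun c => (hfac.extend_apply 0 c).symm)

end

theorem classical_reversible_iff_and_mem_EL_general (n k : ℕ) :
    (∀ T : HeadZ n k → HeadZ n k, IsClassical n k T →
      ((IsTMZ n k T ∧ ∃ T' : HeadZ n k → HeadZ n k,
          IsTMZ n k T' ∧ T ∘ T' = id ∧ T' ∘ T = id) ↔
        ∃ T₀ T₁ : HeadZ n k → HeadZ n k,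
          IsStateSymbolPerm n k T₀ ∧ IsStateDependentShift n k T₁ ∧ T = T₁ ∘ T₀))
    ∧
    (∀ e : Equiv.Perm (HeadZ n k), IsClassical n k ⇑e →
      e ∈ Subgroup.closure (RFAsetZ n k ∪ LPsetZ n k)) := by
  refine ⟨fun T hT => ⟨?_, ?_⟩, fun e he => ?_⟩
  · rintro ⟨-, T', -, -, hT'T⟩
    obtain ⟨π, δ, hδ, rfl⟩ :=
      hT.exists_eq_permShift (Function.LeftInverse.injective (congrFun hT'T))
    refine ⟨permShift π 0, permShift 1 δ, isStateSymbolPerm_iff.mpr ⟨π, rfl⟩,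
      isStateDependentShift_iff.mpr ⟨δ, hδ, rfl⟩, ?_⟩
    rw [← Equiv.Perm.coe_mul, ← permShift_eq_mul]
  · rintro ⟨T₀, T₁, h₀, h₁, rfl⟩
    obtain ⟨π, rfl⟩ := isStateSymbolPerm_iff.mp h₀
    obtain ⟨δ, -, rfl⟩ := isStateDependentShift_iff.mp h₁
    rw [← Equiv.Perm.coe_mul, ← permShift_eq_mul]
    obtain ⟨hTM, hTM'⟩ := permShift_mem_RTMsetZ π δ
    exact ⟨hTM, _, hTM', (permShift π δ).self_comp_symm, (permShift π δ).symm_comp_self⟩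
  · obtain ⟨π, δ, -, hfac⟩ := he.exists_eq_permShift e.injective
    rw [DFunLike.coe_injective hfac]
    exact permShift_mem_closure π δ

/-- A classical `(ℤ,n,k)`-Turing machine is reversible if and only
if it factors as `T = T₁ ∘ T₀` with `T₀` a state-symbol permutation and `T₁` a
state-dependent shift.  In particular every reversible classical Turing machine,
viewed as a permutation of the moving-head space, lies in `EL(ℤ,n,k)`, the subgroup
generated by the tape-preserving machines together with the head-fixing machines. -/
theorem classical_reversible_iff_and_mem_EL (n k : ℕ) (hn : 1 ≤ n) (hk : 1 ≤ k) :
    (∀ T : HeadZ n k → HeadZ n k, IsClassical n k T →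
      ((IsTMZ n k T ∧ ∃ T' : HeadZ n k → HeadZ n k,
          IsTMZ n k T' ∧ T ∘ T' = id ∧ T' ∘ T = id) ↔
        ∃ T₀ T₁ : HeadZ n k → HeadZ n k,
          IsStateSymbolPerm n k T₀ ∧ IsStateDependentShift n k T₁ ∧ T = T₁ ∘ T₀))
    ∧
    (∀ e : Equiv.Perm (HeadZ n k), IsClassical n k ⇑e →
      e ∈ Subgroup.closure (RFAsetZ n k ∪ LPsetZ n k)) :=
  classical_reversible_iff_and_mem_EL_general n k
end
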